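/- arXiv:2405.10343 — 2 statements merged into one kernel-verified Lean document; each statement's English description precedes it below -/
import Mathlib

section
/- Let (Ω, μ) be a probability space, let X, X̃ : Ω → ℝ^{dX} be measurable (the joint law of a raw data point and its augmentation), let f : ℝ^{dX} → ℝ^{dZ}, h : ℝ^{dZ} → ℝ^{dZ}, g : ℝ^{dZ} → ℝ^{dX} be measurable, and define L_RC = ∫ ‖g(h(f(X̃ ω))) − X ω‖ dμ(ω), L_CL = ∫ ‖h(f(X̃ ω)) − f(X ω)‖ dμ(ω), and L_reg = ∫ ‖g(f(X ω)) − X ω‖ dμ(ω), where ‖·‖ is the Euclidean norm, assuming all integrands are integrable. If there exists λmax > 0 such that ‖g(a) − g(b)‖ ≤ λmax · ‖a − b‖ for all a, b ∈ ℝ^{dZ}, then L_CL + (1/λmax) · L_reg ≥ (1/λmax) · L_RC. -/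
open MeasureTheory

section

variable {E F : Type*} [NormedAddCommGroup E] [NormedAddCommGroup F]

theorem norm_apply_sub_le_of_norm_sub_le_mul {g : E → F} {K : ℝ}
    (hg : ∀ a b, ‖g a - g b‖ ≤ K * ‖a - b‖) (a b : E) (y : F) :
    ‖g a - y‖ ≤ K * ‖a - b‖ + ‖g b - y‖ :=
  (norm_sub_le_norm_sub_add_norm_sub _ (g b) _).trans (by gcongr; exact hg a b)

theorem integral_norm_apply_sub_le_of_norm_sub_le_mul {Ω : Type*} [MeasurableSpace Ω]
    (μ : Measure Ω) {g : E → F} {K : ℝ} (hg : ∀ a b, ‖g a - g b‖ ≤ K * ‖a - b‖)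
    {A B : Ω → E} {Y : Ω → F}
    (hAB : Integrable (fun ω => ‖A ω - B ω‖) μ) (hBY : Integrable (fun ω => ‖g (B ω) - Y ω‖) μ) :
    ∫ ω, ‖g (A ω) - Y ω‖ ∂μ ≤ K * ∫ ω, ‖A ω - B ω‖ ∂μ + ∫ ω, ‖g (B ω) - Y ω‖ ∂μ := by
  rw [← integral_const_mul, ← integral_add (hAB.const_mul K) hBY]
  exact integral_mono_of_nonneg (.of_forall fun _ => norm_nonneg _)
    ((hAB.const_mul K).add hBY) (.of_forall fun ω => norm_apply_sub_le_of_norm_sub_le_mul hg _ _ _)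

end

theorem unicorn_theorem1_part1_general
    {dX dZ : ℕ} {Ω : Type*} [MeasurableSpace Ω]
    (μ : Measure Ω)
    (X Xt : Ω → EuclideanSpace ℝ (Fin dX))
    (f : EuclideanSpace ℝ (Fin dX) → EuclideanSpace ℝ (Fin dZ))
    (h : EuclideanSpace ℝ (Fin dZ) → EuclideanSpace ℝ (Fin dZ))
    (g : EuclideanSpace ℝ (Fin dZ) → EuclideanSpace ℝ (Fin dX))
    (hCL : Integrable (fun ω => ‖h (f (Xt ω)) - f (X ω)‖) μ)
    (hreg : Integrable (fun ω => ‖g (f (X ω)) - X ω‖) μ)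
    (lamMax : ℝ) (hlam : 0 < lamMax)
    (hLip : ∀ a b : EuclideanSpace ℝ (Fin dZ), ‖g a - g b‖ ≤ lamMax * ‖a - b‖) :
    (1 / lamMax) * ∫ ω, ‖g (h (f (Xt ω))) - X ω‖ ∂μ ≤
      (∫ ω, ‖h (f (Xt ω)) - f (X ω)‖ ∂μ) +
        (1 / lamMax) * ∫ ω, ‖g (f (X ω)) - X ω‖ ∂μ := by
  rw [one_div, inv_mul_le_iff₀ hlam, mul_add, mul_inv_cancel_left₀ hlam.ne']
  exact integral_norm_apply_sub_le_of_norm_sub_le_mul μ hLip hCL hreg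

/-- Part ① of Theorem 1: if the decoder `g` is `λmax`-Lipschitz, then
`L_CL + (1/λmax) · L_reg ≥ (1/λmax) · L_RC`. -/
theorem unicorn_theorem1_part1
    {dX dZ : ℕ} {Ω : Type*} [MeasurableSpace Ω]
    (μ : Measure Ω) [IsProbabilityMeasure μ]
    (X Xt : Ω → EuclideanSpace ℝ (Fin dX))
    (hX : Measurable X) (hXt : Measurable Xt)
    (f : EuclideanSpace ℝ (Fin dX) → EuclideanSpace ℝ (Fin dZ))
    (h : EuclideanSpace ℝ (Fin dZ) → EuclideanSpace ℝ (Fin dZ))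
    (g : EuclideanSpace ℝ (Fin dZ) → EuclideanSpace ℝ (Fin dX))
    (hf : Measurable f) (hh : Measurable h) (hg : Measurable g)
    (hRC : Integrable (fun ω => ‖g (h (f (Xt ω))) - X ω‖) μ)
    (hCL : Integrable (fun ω => ‖h (f (Xt ω)) - f (X ω)‖) μ)
    (hreg : Integrable (fun ω => ‖g (f (X ω)) - X ω‖) μ)
    (lamMax : ℝ) (hlam : 0 < lamMax)
    (hLip : ∀ a b : EuclideanSpace ℝ (Fin dZ), ‖g a - g b‖ ≤ lamMax * ‖a - b‖) :
    (1 / lamMax) * ∫ ω, ‖g (h (f (Xt ω))) - X ω‖ ∂μ ≤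
      (∫ ω, ‖h (f (Xt ω)) - f (X ω)‖ ∂μ) +
        (1 / lamMax) * ∫ ω, ‖g (f (X ω)) - X ω‖ ∂μ :=
  unicorn_theorem1_part1_general μ X Xt f h g hCL hreg lamMax hlam hLip
end

section
/- Let ν be a probability measure on ℝ^{dX} (the distribution of raw inputs) and let κ be a Markov kernel from ℝ^{dX} to ℝ^{dX} (the augmentation distribution, x ↦ κ(x) = p(·|x)). Let u, v : ℝ^{dX} → ℝ^{dZ} be measurable with ‖u(x̃)‖ = 1 for all x̃ and ‖v(x)‖ = 1 for all x, where ‖·‖ is the Euclidean norm. Define the SimSiam contrastive loss L = ∫ ∫ ‖u(x̃) − v(x)‖² κ(x)(dx̃) ν(dx) and the symmetric contrastive loss L_symm = ∫ ∫ ∫ ‖u(x̃) − u(x̃′)‖² κ(x)(dx̃) κ(x)(dx̃′) ν(dx); assume all integrands are integrable (with x̃ ↦ u(x̃) Bochner integrable with respect to each κ(x)). Then L ≥ (1/2) · L_symm. -/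
open MeasureTheory ProbabilityTheory

open scoped RealInnerProductSpace

lemma simsiam_pointwise
    {dX dZ : ℕ}
    (μ : Measure (EuclideanSpace ℝ (Fin dX))) [IsProbabilityMeasure μ]
    (u : EuclideanSpace ℝ (Fin dX) → EuclideanSpace ℝ (Fin dZ))
    (w : EuclideanSpace ℝ (Fin dZ))
    (hu_norm : ∀ x, ‖u x‖ = 1) (hw_norm : ‖w‖ = 1)
    (hu_int : Integrable u μ) :
    (1 / 2) * ∫ xt, ∫ xt', ‖u xt - u xt'‖ ^ 2 ∂μ ∂μ ≤
      ∫ xt, ‖u xt - w‖ ^ 2 ∂μ := by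
  set m : EuclideanSpace ℝ (Fin dZ) := ∫ xt, u xt ∂μ with hm
  have hsq : ∀ a b : EuclideanSpace ℝ (Fin dZ), ‖a‖ = 1 → ‖b‖ = 1 →
      ‖a - b‖ ^ 2 = 2 - 2 * ⟪a, b⟫ := by
    intro a b ha hb
    have := @norm_sub_sq_real (EuclideanSpace ℝ (Fin dZ)) _ _ a b
    rw [ha, hb] at this
    nlinarith [this]
  -- inner integral for symmetric loss
  have hinner : ∀ xt, ∫ xt', ‖u xt - u xt'‖ ^ 2 ∂μ = 2 - 2 * ⟪u xt, m⟫ := by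
    intro xt
    have h1 : (fun xt' => ‖u xt - u xt'‖ ^ 2) =
        fun xt' => 2 - 2 * ⟪u xt, u xt'⟫ := by
      funext xt'
      exact hsq _ _ (hu_norm xt) (hu_norm xt')
    rw [h1]
    have hint : Integrable (fun xt' => ⟪u xt, u xt'⟫) μ := hu_int.const_inner _
    rw [integral_sub (integrable_const 2) (hint.const_mul 2),
      integral_const_mul, integral_inner hu_int, integral_const]
    simp
    rfl
  have hS_eq : ∫ xt, ∫ xt', ‖u xt - u xt'‖ ^ 2 ∂μ ∂μ = 2 - 2 * ‖m‖ ^ 2 := by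
    have h1 : (fun xt => ∫ xt', ‖u xt - u xt'‖ ^ 2 ∂μ) =
        fun xt => 2 - 2 * ⟪m, u xt⟫ := by
      funext xt
      rw [hinner xt, real_inner_comm]
    rw [h1]
    have hint : Integrable (fun xt => ⟪m, u xt⟫) μ := hu_int.const_inner _
    rw [integral_sub (integrable_const 2) (hint.const_mul 2),
      integral_const_mul, integral_inner hu_int, integral_const,
      real_inner_self_eq_norm_sq]
    simp
  have hL_eq : ∫ xt, ‖u xt - w‖ ^ 2 ∂μ = 2 - 2 * ⟪w, m⟫ := by
    have h1 : (fun xt => ‖u xt - w‖ ^ 2) = fun xt => 2 - 2 * ⟪w, u xt⟫ := by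
      funext xt
      rw [hsq _ _ (hu_norm xt) hw_norm, real_inner_comm]
    rw [h1]
    have hint : Integrable (fun xt => ⟪w, u xt⟫) μ := hu_int.const_inner _
    rw [integral_sub (integrable_const 2) (hint.const_mul 2),
      integral_const_mul, integral_inner hu_int, integral_const]
    simp
    rfl
  rw [hS_eq, hL_eq]
  have key : 0 ≤ ‖w - m‖ ^ 2 := by positivity
  have := @norm_sub_sq_real (EuclideanSpace ℝ (Fin dZ)) _ _ w m
  rw [hw_norm] at this
  nlinarith [key, this]

/-- The key intermediate inequality in the proof of Theorem 2: the (asymmetric) SimSiam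
contrastive loss `L` upper bounds one half of the symmetric contrastive loss `L_symm`
that aligns pairs of independent augmentations of the same raw input. -/
theorem simsiam_bounds_symmetric
    {dX dZ : ℕ}
    (ν : Measure (EuclideanSpace ℝ (Fin dX))) [IsProbabilityMeasure ν]
    (κ : Kernel (EuclideanSpace ℝ (Fin dX)) (EuclideanSpace ℝ (Fin dX))) [IsMarkovKernel κ]
    (u v : EuclideanSpace ℝ (Fin dX) → EuclideanSpace ℝ (Fin dZ))
    (hu : Measurable u) (hv : Measurable v)
    (hu_norm : ∀ x, ‖u x‖ = 1) (hv_norm : ∀ x, ‖v x‖ = 1)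
    (hu_int : ∀ x, Integrable u (κ x))
    (hL_inner : ∀ x, Integrable (fun xt => ‖u xt - v x‖ ^ 2) (κ x))
    (hL : Integrable (fun x => ∫ xt, ‖u xt - v x‖ ^ 2 ∂(κ x)) ν)
    (hS_inner2 : ∀ x xt, Integrable (fun xt' => ‖u xt - u xt'‖ ^ 2) (κ x))
    (hS_inner1 : ∀ x, Integrable (fun xt => ∫ xt', ‖u xt - u xt'‖ ^ 2 ∂(κ x)) (κ x))
    (hS : Integrable (fun x => ∫ xt, ∫ xt', ‖u xt - u xt'‖ ^ 2 ∂(κ x) ∂(κ x)) ν) :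
    (1 / 2) * ∫ x, ∫ xt, ∫ xt', ‖u xt - u xt'‖ ^ 2 ∂(κ x) ∂(κ x) ∂ν ≤
      ∫ x, ∫ xt, ‖u xt - v x‖ ^ 2 ∂(κ x) ∂ν := by
  rw [← integral_const_mul]
  refine integral_mono (hS.const_mul _) hL ?_
  intro x
  exact simsiam_pointwise (κ x) u (v x) hu_norm (hv_norm x) (hu_int x)
end
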